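/- For the TRIP-Stern sequence for (e,13,12), the maximal terms lie on the path through the tree obtained by alternating between first selecting the left edge and then the right edge: for every n and every word v ∈ {0,1}ⁿ, each of the three entries of Δ(v) is at most the maximum entry of Δ(wₙ), where wₙ = (0,1,0,1,…) is the alternating word of length n beginning with 0. Hence the maximum entry m_n of level n equals the maximum entry of Δ(wₙ). -/

import Mathlib

/-- `f₀(a,b,c) = (a+c,c,b)` for the triplet `(e,13,12)`. -/
def f0 (p : ℤ × ℤ × ℤ) : ℤ × ℤ × ℤ := (p.1 + p.2.2, p.2.2, p.2.1)

/-- `f₁(a,b,c) = (b,a,a+c)` for the triplet `(e,13,12)`. -/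
def f1 (p : ℤ × ℤ × ℤ) : ℤ × ℤ × ℤ := (p.2.1, p.1, p.1 + p.2.2)

/-- One step of the TRIP-Stern tree: apply `f₁` on a `true` and `f₀` on a `false`. -/
def step (p : ℤ × ℤ × ℤ) (i : Bool) : ℤ × ℤ × ℤ := if i then f1 p else f0 p

/-- `Δ(v) = f_{iₙ}(⋯ f_{i₁}(1,1,1) ⋯)`, applying `f_{i₁}` first. -/
def delta (v : List Bool) : ℤ × ℤ × ℤ := v.foldl step (1, 1, 1)

/-- The maximum coordinate of a triple. -/
def maxEntry (p : ℤ × ℤ × ℤ) : ℤ := max p.1 (max p.2.1 p.2.2)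

/-- `m n` is the maximum entry of level `n` of the TRIP-Stern sequence for `(e,13,12)`. -/
noncomputable def m (n : ℕ) : ℤ :=
  Finset.sup' Finset.univ Finset.univ_nonempty
    (fun v : Fin n → Bool => maxEntry (delta (List.ofFn v)))

/-- `altWord n = (0,1,0,1,…)` is the alternating word of length `n` beginning with `0`
(`false` = left edge, `true` = right edge). -/
def altWord (n : ℕ) : List Bool := (List.range n).map (fun k => decide (k % 2 = 1))

/-!
Compare every triple `p = (a,b,c)` of level `n` with the triple `q` of level `n` on the
alternating path through three quantities: the maximum entry, the outer sum `a + c` and the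
total `a + b + c`. Both maps send `p` to a triple whose outer sum is the total of `p`, which
has `a + c` as an entry, and whose total exceeds that of `p` by `c` or by `a`. Along the
alternating path the entries are nonnegative and the entry added is always the maximum one,
so the three comparisons propagate from level `n` to level `n + 1`.
-/

def outerSum (p : ℤ × ℤ × ℤ) : ℤ := p.1 + p.2.2

def entrySum (p : ℤ × ℤ × ℤ) : ℤ := p.1 + p.2.1 + p.2.2

lemma outerSum_step (p : ℤ × ℤ × ℤ) (i : Bool) : outerSum (step p i) = entrySum p := by
  obtain ⟨a, b, c⟩ := p
  cases i <;>
    simp only [step, f0, f1, Bool.false_eq_true, ↓reduceIte, outerSum, entrySum] <;> ring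

lemma entrySum_step_le (p : ℤ × ℤ × ℤ) (i : Bool) :
    entrySum (step p i) ≤ entrySum p + maxEntry p := by
  obtain ⟨a, b, c⟩ := p
  cases i <;>
    simp only [step, f0, f1, Bool.false_eq_true, ↓reduceIte, entrySum, maxEntry] <;> omega

lemma maxEntry_step_le (p : ℤ × ℤ × ℤ) (i : Bool) :
    maxEntry (step p i) ≤ max (outerSum p) (maxEntry p) := by
  obtain ⟨a, b, c⟩ := p
  cases i <;>
    simp only [step, f0, f1, Bool.false_eq_true, ↓reduceIte, outerSum, maxEntry] <;> omega

lemma outerSum_le_maxEntry_step (p : ℤ × ℤ × ℤ) (i : Bool) :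
    outerSum p ≤ maxEntry (step p i) := by
  obtain ⟨a, b, c⟩ := p
  cases i <;>
    simp only [step, f0, f1, Bool.false_eq_true, ↓reduceIte, outerSum, maxEntry] <;> omega

structure Dominated (p q : ℤ × ℤ × ℤ) : Prop where
  maxEntry_le : maxEntry p ≤ maxEntry q
  outerSum_le : outerSum p ≤ outerSum q
  entrySum_le : entrySum p ≤ entrySum q

lemma Dominated.map_step {p q : ℤ × ℤ × ℤ} (h : Dominated p q) (hq : maxEntry q ≤ outerSum q)
    {j : Bool} (hj : entrySum (step q j) = entrySum q + maxEntry q) (i : Bool) :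
    Dominated (step p i) (step q j) where
  maxEntry_le := calc
    maxEntry (step p i) ≤ max (outerSum p) (maxEntry p) := maxEntry_step_le p i
    _ ≤ outerSum q := max_le h.outerSum_le (h.maxEntry_le.trans hq)
    _ ≤ maxEntry (step q j) := outerSum_le_maxEntry_step q j
  outerSum_le := by simpa only [outerSum_step] using h.entrySum_le
  entrySum_le := calc
    entrySum (step p i) ≤ entrySum p + maxEntry p := entrySum_step_le p i
    _ ≤ entrySum q + maxEntry q := add_le_add h.entrySum_le h.maxEntry_le
    _ = entrySum (step q j) := hj.symm

lemma delta_append_singleton (v : List Bool) (i : Bool) :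
    delta (v ++ [i]) = step (delta v) i := by
  simp [delta, List.foldl_append]

lemma altWord_succ (n : ℕ) : altWord (n + 1) = altWord n ++ [decide (n % 2 = 1)] := by
  simp [altWord, List.range_succ]

lemma delta_altWord_succ (n : ℕ) :
    delta (altWord (n + 1)) = step (delta (altWord n)) (decide (n % 2 = 1)) := by
  rw [altWord_succ, delta_append_singleton]

lemma altWord_eq_ofFn (n : ℕ) :
    altWord n = List.ofFn (fun k : Fin n => decide ((k : ℕ) % 2 = 1)) := by
  apply List.ext_getElem <;> simp [altWord]

lemma delta_altWord_nonneg_and_maxEntry (n : ℕ) :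
    0 ≤ (delta (altWord n)).1 ∧ 0 ≤ (delta (altWord n)).2.1 ∧ 0 ≤ (delta (altWord n)).2.2 ∧
    maxEntry (delta (altWord n)) =
      if n % 2 = 1 then (delta (altWord n)).1 else (delta (altWord n)).2.2 := by
  induction n with
  | zero => simp [altWord, delta, maxEntry]
  | succ n ih =>
    rw [delta_altWord_succ]
    rcases Nat.mod_two_eq_zero_or_one n with h | h <;>
      simp [h, Nat.succ_mod_two_eq_one_iff, step, f0, f1, maxEntry] at ih ⊢ <;> omega

lemma maxEntry_delta_altWord_le_outerSum (n : ℕ) :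
    maxEntry (delta (altWord n)) ≤ outerSum (delta (altWord n)) := by
  obtain ⟨ha, -, hc, hmax⟩ := delta_altWord_nonneg_and_maxEntry n
  rw [hmax, outerSum]
  split_ifs <;> omega

lemma entrySum_delta_altWord_succ (n : ℕ) :
    entrySum (delta (altWord (n + 1))) =
      entrySum (delta (altWord n)) + maxEntry (delta (altWord n)) := by
  obtain ⟨-, -, -, hmax⟩ := delta_altWord_nonneg_and_maxEntry n
  rw [delta_altWord_succ, hmax]
  rcases Nat.mod_two_eq_zero_or_one n with h | h <;> simp [h, step, f0, f1, entrySum] <;> ring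

lemma dominated_delta_altWord (v : List Bool) :
    Dominated (delta v) (delta (altWord v.length)) := by
  induction v using List.reverseRecOn with
  | nil => exact ⟨le_rfl, le_rfl, le_rfl⟩
  | append_singleton v i ih =>
    rw [List.length_append, List.length_singleton, delta_append_singleton, delta_altWord_succ]
    refine ih.map_step (maxEntry_delta_altWord_le_outerSum _) ?_ i
    rw [← delta_altWord_succ]
    exact entrySum_delta_altWord_succ _

lemma maxEntry_delta_le (v : List Bool) :
    maxEntry (delta v) ≤ maxEntry (delta (altWord v.length)) :=
  (dominated_delta_altWord v).maxEntry_le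

/-- For the TRIP-Stern sequence for `(e,13,12)`, the maximal terms lie on the path
obtained by alternating between first selecting the left edge and then the right edge:
every entry of every level-`n` triple `Δ(v)` is at most the maximum entry of
`Δ(altWord n)`, and hence the maximum entry `m n` of level `n` equals the maximum entry
of `Δ(altWord n)`. -/
theorem maxTerms_alternating_e1312 :
    (∀ (n : ℕ) (v : Fin n → Bool),
      (delta (List.ofFn v)).1 ≤ maxEntry (delta (altWord n)) ∧
      (delta (List.ofFn v)).2.1 ≤ maxEntry (delta (altWord n)) ∧
      (delta (List.ofFn v)).2.2 ≤ maxEntry (delta (altWord n))) ∧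
    (∀ n : ℕ, m n = maxEntry (delta (altWord n))) := by
  have hle (n : ℕ) (v : Fin n → Bool) :
      maxEntry (delta (List.ofFn v)) ≤ maxEntry (delta (altWord n)) := by
    simpa using maxEntry_delta_le (List.ofFn v)
  refine ⟨fun n v => ?_, fun n => le_antisymm ?_ ?_⟩
  · have h := hle n v
    simp only [maxEntry, max_le_iff] at h
    exact ⟨h.1, h.2.1, h.2.2⟩
  · exact Finset.sup'_le _ _ fun v _ => hle n v
  · rw [altWord_eq_ofFn]
    exact Finset.le_sup' (fun v : Fin n → Bool => maxEntry (delta (List.ofFn v)))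
      (Finset.mem_univ _)
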